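/- Fix β ∈ (0,1) and let p = p(N) ∈ (0,1] be a sequence with p(N)·N → ∞. Let T_N^c := {σ ∈ {-1,+1}^N : |σ|² > N²p} and A_N(β) := -β²/8 + N²p(cosh(β/(2Np)) - 1). Then Σ_{σ∈T_N^c} E[e^{-βH(σ)}] = o(2^N e^{A_N(β)}) as N → ∞; that is, 2^{-N} e^{-A_N(β)} Σ_{σ∈T_N^c} E[e^{-βH(σ)}] → 0. -/

import Mathlib

/-!
Averaging over the graph factorizes over the `N²` independent edges, and
`1 - p + p eˣ ≤ exp (p (eˣ - 1))` gives `𝔼 e^{-βH(σ)} ≤ e^{N²p(cosh b - 1)} e^{β_N |σ|²/(2N)}`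
with `b = β/(2Np)` and `β_N = 2Np sinh b → β < 1`. Fix `s ∈ (β, 1)`. On atypical configurations,
`|σ|² > N²p`, so raising the coupling from `β_N ≤ s` to `(1 + s)/2` costs a factor
`e^{-(1 - s)Np/4}`, while the Hubbard–Stratonovich transform bounds
`∑_σ e^{t|σ|²/(2N)} ≤ 2^N / √(1 - t)` for `t < 1`. Since `Np → ∞`, the ratio tends to `0`.
-/

open MeasureTheory ProbabilityTheory Filter
open scoped Classical

noncomputable section

/-- The spin value `±1` associated to a Boolean. -/
def spin (b : Bool) : ℝ := if b then 1 else -1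

/-- The total magnetization `|σ| = σ₁ + ⋯ + σ_N` of a spin configuration. -/
def mag {N : ℕ} (σ : Fin N → Bool) : ℝ := ∑ i, spin (σ i)

/-- The overlap `|στ| = ∑ σᵢτᵢ` of two spin configurations. -/
def magPair {N : ℕ} (σ τ : Fin N → Bool) : ℝ := ∑ i, spin (σ i) * spin (τ i)

/-- The Hamiltonian `H(σ) = -(1/(2Np)) ∑_{i,j} ε_{i,j} σᵢ σⱼ` of the Ising model on the
directed Erdős–Rényi graph with edge indicators `ε`. -/
def hamil (N : ℕ) (p : ℝ) (ε : Fin N × Fin N → Bool) (σ : Fin N → Bool) : ℝ :=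
  -(1 / (2 * N * p)) * ∑ i : Fin N, ∑ j : Fin N,
    (if ε (i, j) then (1 : ℝ) else 0) * spin (σ i) * spin (σ j)

/-- The joint law of the i.i.d. Bernoulli(p) edge indicators `(ε_{i,j})_{i,j=1}^N`. -/
def bern (N : ℕ) (p : ℝ) : Measure (Fin N × Fin N → Bool) :=
  Measure.pi fun _ => (PMF.bernoulli (min 1 (Real.toNNReal p)) (min_le_left _ _)).toMeasure

/-- The generalized partition function `Z_N(β, g) = ∑_σ e^{-βH(σ)} g(|σ|/√N)`. -/
def ZNg (N : ℕ) (p β : ℝ) (g : ℝ → ℝ) (ε : Fin N × Fin N → Bool) : ℝ :=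
  ∑ σ : Fin N → Bool, Real.exp (-β * hamil N p ε σ) * g (mag σ / Real.sqrt N)

/-- The expectation `𝔼 Z_N(β, g)` over the randomness of the graph. -/
def EZNg (N : ℕ) (p β : ℝ) (g : ℝ → ℝ) : ℝ :=
  ∫ ε, ZNg N p β g ε ∂(bern N p)

/-- The Gaussian expectation `𝔼_ξ [g(ξ) e^{β ξ²/2}]` for a standard normal `ξ`. -/
def gaussExp (β : ℝ) (g : ℝ → ℝ) : ℝ :=
  ∫ x, g x * Real.exp (β * x ^ 2 / 2) ∂(gaussianReal 0 1)

lemma exp_mul_eq_cosh_add_sinh_mul (x : ℝ) {y : ℝ} (hy : y = 1 ∨ y = -1) :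
    Real.exp (x * y) = Real.cosh x + Real.sinh x * y := by
  rcases hy with rfl | rfl
  · simp [Real.cosh_add_sinh]
  · simp [← sub_eq_add_neg, Real.cosh_sub_sinh]

lemma spin_mul_spin_eq_one_or (s t : Bool) : spin s * spin t = 1 ∨ spin s * spin t = -1 := by
  cases s <;> cases t <;> simp [spin]

lemma sum_spin_mul_spin {N : ℕ} (σ : Fin N → Bool) :
    ∑ q : Fin N × Fin N, spin (σ q.1) * spin (σ q.2) = mag σ ^ 2 := by
  rw [Fintype.sum_prod_type, sq, mag, Finset.sum_mul_sum]

lemma sum_exp_mul_mag (N : ℕ) (c : ℝ) :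
    ∑ σ : Fin N → Bool, Real.exp (c * mag σ) = (2 * Real.cosh c) ^ N := by
  have h : ∀ σ : Fin N → Bool, Real.exp (c * mag σ) = ∏ i, Real.exp (c * spin (σ i)) := by
    intro σ
    rw [mag, Finset.mul_sum, Real.exp_sum]
  simp_rw [h]
  rw [← Fintype.prod_sum (fun (_ : Fin N) (b : Bool) => Real.exp (c * spin b))]
  simp [spin, Real.cosh_eq]
  ring

set_option linter.deprecated false in
lemma integral_bernoulli {q : NNReal} (hq : q ≤ 1) (f : Bool → ℝ) :
    ∫ b, f b ∂(PMF.bernoulli q hq).toMeasure = q * f true + (1 - q) * f false := by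
  rw [PMF.integral_eq_sum, Fintype.sum_bool]
  simp only [PMF.bernoulli_apply, cond_true, cond_false, smul_eq_mul, ENNReal.coe_toReal,
    NNReal.coe_sub hq, NNReal.coe_one]

lemma integral_prod_bern {N : ℕ} {p : ℝ} (hp0 : 0 ≤ p) (hp1 : p ≤ 1)
    (f : Fin N × Fin N → Bool → ℝ) :
    ∫ ε, ∏ q, f q (ε q) ∂(bern N p) = ∏ q, (p * f q true + (1 - p) * f q false) := by
  have hmin : ((min 1 p.toNNReal : NNReal) : ℝ) = p := by
    rw [min_eq_right (Real.toNNReal_le_one.mpr hp1), Real.coe_toNNReal _ hp0]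
  rw [bern, integral_fintype_prod_eq_prod]
  simp only [integral_bernoulli, hmin]

lemma exp_neg_mul_hamil (N : ℕ) (p β : ℝ) (ε : Fin N × Fin N → Bool) (σ : Fin N → Bool) :
    Real.exp (-β * hamil N p ε σ) = ∏ q : Fin N × Fin N,
      (if ε q then Real.exp (β / (2 * N * p) * (spin (σ q.1) * spin (σ q.2))) else 1) := by
  have h : -β * hamil N p ε σ = ∑ q : Fin N × Fin N,
      (if ε q then β / (2 * N * p) * (spin (σ q.1) * spin (σ q.2)) else 0) := by
    rw [hamil, Fintype.sum_prod_type]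
    simp only [Finset.mul_sum]
    refine Finset.sum_congr rfl fun i _ => Finset.sum_congr rfl fun j _ => ?_
    split_ifs <;> ring
  rw [h, Real.exp_sum]
  exact Finset.prod_congr rfl fun q _ => by split_ifs <;> simp

lemma integral_exp_neg_mul_hamil {N : ℕ} {p : ℝ} (hp0 : 0 ≤ p) (hp1 : p ≤ 1) (β : ℝ)
    (σ : Fin N → Bool) :
    ∫ ε, Real.exp (-β * hamil N p ε σ) ∂(bern N p) = ∏ q : Fin N × Fin N,
      (p * Real.exp (β / (2 * N * p) * (spin (σ q.1) * spin (σ q.2))) + (1 - p)) := by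
  simp_rw [exp_neg_mul_hamil]
  rw [integral_prod_bern hp0 hp1 (fun q e =>
    if e then Real.exp (β / (2 * N * p) * (spin (σ q.1) * spin (σ q.2))) else 1)]
  simp

lemma integral_exp_neg_mul_hamil_le {N : ℕ} {p : ℝ} (hp0 : 0 ≤ p) (hp1 : p ≤ 1) (β : ℝ)
    (σ : Fin N → Bool) :
    ∫ ε, Real.exp (-β * hamil N p ε σ) ∂(bern N p) ≤
      Real.exp ((N : ℝ) ^ 2 * p * (Real.cosh (β / (2 * N * p)) - 1) +
        p * Real.sinh (β / (2 * N * p)) * mag σ ^ 2) := by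
  set b := β / (2 * N * p)
  rw [integral_exp_neg_mul_hamil hp0 hp1]
  calc ∏ q : Fin N × Fin N, (p * Real.exp (b * (spin (σ q.1) * spin (σ q.2))) + (1 - p))
      ≤ ∏ q : Fin N × Fin N, Real.exp (p * (Real.exp (b * (spin (σ q.1) * spin (σ q.2))) - 1)) := by
        refine Finset.prod_le_prod (fun q _ => ?_) fun q _ => ?_
        · have := sub_nonneg.2 hp1
          positivity
        · linarith [Real.add_one_le_exp (p * (Real.exp (b * (spin (σ q.1) * spin (σ q.2))) - 1))]
    _ = Real.exp (∑ q : Fin N × Fin N,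
          (p * (Real.cosh b - 1) + p * Real.sinh b * (spin (σ q.1) * spin (σ q.2)))) := by
        rw [Real.exp_sum]
        refine Finset.prod_congr rfl fun q _ => ?_
        rw [exp_mul_eq_cosh_add_sinh_mul b (spin_mul_spin_eq_one_or _ _)]
        ring_nf
    _ = _ := by
        rw [Finset.sum_add_distrib, Finset.sum_const, ← Finset.mul_sum, sum_spin_mul_spin,
          Finset.card_univ, Fintype.card_prod, Fintype.card_fin, nsmul_eq_mul]
        push_cast
        ring_nf

lemma exp_mul_sub_sq_half (a x : ℝ) :
    Real.exp (a * x - x ^ 2 / 2) = Real.exp (a ^ 2 / 2) * Real.exp (-(1 / 2) * (x - a) ^ 2) := by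
  rw [← Real.exp_add]
  ring_nf

lemma integrable_exp_mul_sub_sq_half (a : ℝ) :
    Integrable fun x : ℝ => Real.exp (a * x - x ^ 2 / 2) := by
  simp_rw [exp_mul_sub_sq_half a]
  exact ((integrable_exp_neg_mul_sq (by norm_num)).comp_sub_right a).const_mul _

lemma integral_exp_mul_sub_sq_half (a : ℝ) :
    ∫ x, Real.exp (a * x - x ^ 2 / 2) = √(2 * Real.pi) * Real.exp (a ^ 2 / 2) := by
  simp_rw [exp_mul_sub_sq_half a]
  rw [integral_const_mul, integral_sub_right_eq_self (fun x => Real.exp (-(1 / 2) * x ^ 2)) a,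
    integral_gaussian, mul_comm]
  congr 2
  ring

lemma sum_exp_mag_sq_le (N : ℕ) {a : ℝ} (ha0 : 0 ≤ a) (ha1 : N * a < 1) :
    ∑ σ : Fin N → Bool, Real.exp (a * mag σ ^ 2 / 2) ≤ 2 ^ N / √(1 - N * a) := by
  set κ := √a
  have hκ : κ ^ 2 = a := Real.sq_sqrt ha0
  have h2π : 0 < √(2 * Real.pi) := by positivity
  have hlinearize : ∀ σ : Fin N → Bool, Real.exp (a * mag σ ^ 2 / 2) =
      (√(2 * Real.pi))⁻¹ * ∫ x, Real.exp (κ * mag σ * x - x ^ 2 / 2) := by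
    intro σ
    rw [integral_exp_mul_sub_sq_half, inv_mul_cancel_left₀ h2π.ne', mul_pow, hκ]
  have hsum : ∀ x : ℝ, ∑ σ : Fin N → Bool, Real.exp (κ * mag σ * x - x ^ 2 / 2) =
      (2 * Real.cosh (κ * x)) ^ N * Real.exp (-x ^ 2 / 2) := by
    intro x
    simp_rw [sub_eq_add_neg, Real.exp_add, ← Finset.sum_mul, mul_right_comm κ _ x,
      sum_exp_mul_mag, neg_div]
  have hcosh : ∀ x : ℝ, (2 * Real.cosh (κ * x)) ^ N * Real.exp (-x ^ 2 / 2) ≤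
      2 ^ N * Real.exp (-((1 - N * a) / 2) * x ^ 2) := by
    intro x
    calc (2 * Real.cosh (κ * x)) ^ N * Real.exp (-x ^ 2 / 2)
        ≤ (2 * Real.exp ((κ * x) ^ 2 / 2)) ^ N * Real.exp (-x ^ 2 / 2) := by
          gcongr
          exact Real.cosh_le_exp_half_sq _
      _ = 2 ^ N * Real.exp (-((1 - N * a) / 2) * x ^ 2) := by
          rw [mul_pow, ← Real.exp_nat_mul, mul_assoc, ← Real.exp_add, mul_pow, hκ]
          ring_nf
  calc ∑ σ : Fin N → Bool, Real.exp (a * mag σ ^ 2 / 2)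
      = (√(2 * Real.pi))⁻¹ *
          ∫ x, ∑ σ : Fin N → Bool, Real.exp (κ * mag σ * x - x ^ 2 / 2) := by
        simp_rw [hlinearize]
        rw [← Finset.mul_sum,
          integral_finsetSum _ fun σ _ => integrable_exp_mul_sub_sq_half (κ * mag σ)]
    _ ≤ (√(2 * Real.pi))⁻¹ * ∫ x, 2 ^ N * Real.exp (-((1 - N * a) / 2) * x ^ 2) := by
        refine mul_le_mul_of_nonneg_left ?_ (by positivity)
        exact integral_mono
          (integrable_finsetSum _ fun σ _ => integrable_exp_mul_sub_sq_half (κ * mag σ))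
          ((integrable_exp_neg_mul_sq (by linarith)).const_mul _)
          fun x => (hsum x).trans_le (hcosh x)
    _ = 2 ^ N / √(1 - N * a) := by
        rw [integral_const_mul, integral_gaussian, div_div_eq_mul_div, mul_comm Real.pi 2,
          Real.sqrt_div (by positivity) (1 - N * a)]
        field_simp

lemma sinh_le_mul_exp (y : ℝ) : Real.sinh y ≤ y * Real.exp y := by
  have h : 1 - 2 * y ≤ Real.exp (-(2 * y)) := by linarith [Real.add_one_le_exp (-(2 * y))]
  have hsplit : Real.exp (-y) = Real.exp y * Real.exp (-(2 * y)) := by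
    rw [← Real.exp_add]
    ring_nf
  rw [Real.sinh_eq, hsplit]
  nlinarith [Real.exp_pos y]

lemma two_mul_mul_sinh_div_le {N : ℕ} {p : ℝ} (hNp : 0 < (N : ℝ) * p) (β : ℝ) :
    2 * N * p * Real.sinh (β / (2 * N * p)) ≤ β * Real.exp (β / (2 * N * p)) := by
  have h2Np : 0 < 2 * N * p := by linarith
  calc 2 * N * p * Real.sinh (β / (2 * N * p))
      ≤ 2 * N * p * (β / (2 * N * p) * Real.exp (β / (2 * N * p))) := by
        gcongr
        exact sinh_le_mul_exp _
    _ = β * Real.exp (β / (2 * N * p)) := by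
        rw [← mul_assoc, mul_div_cancel₀ _ h2Np.ne']

lemma atypical_sum_le {N : ℕ} (hN : 0 < N) {p β s : ℝ} (hp0 : 0 < p) (hp1 : p ≤ 1)
    (hs0 : 0 ≤ s) (hs1 : s < 1) (hsinh : 2 * N * p * Real.sinh (β / (2 * N * p)) ≤ s) :
    ∑ σ ∈ Finset.univ.filter (fun σ : Fin N → Bool => (N : ℝ) ^ 2 * p < mag σ ^ 2),
        ∫ ε, Real.exp (-β * hamil N p ε σ) ∂(bern N p) ≤
      Real.exp ((N : ℝ) ^ 2 * p * (Real.cosh (β / (2 * N * p)) - 1) - (1 - s) * (N * p) / 4) *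
        (2 ^ N / √((1 - s) / 2)) := by
  set A := (N : ℝ) ^ 2 * p * (Real.cosh (β / (2 * N * p)) - 1)
  have hNR : (0 : ℝ) < N := Nat.cast_pos.2 hN
  set a := (1 + s) / 2 / N
  have ha0 : 0 ≤ a := by positivity
  have hNa : N * a = (1 + s) / 2 := mul_div_cancel₀ _ hNR.ne'
  have hexponent : ∀ m2 : ℝ, (N : ℝ) ^ 2 * p ≤ m2 →
      p * Real.sinh (β / (2 * N * p)) * m2 ≤ a * m2 / 2 - (1 - s) * (N * p) / 4 := by
    intro m2 hm2
    have hsinh' : p * Real.sinh (β / (2 * N * p)) ≤ s / (2 * N) := by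
      rw [le_div_iff₀ (by positivity)]
      linarith
    have hmargin : 0 ≤ (1 - s) / (4 * N) := div_nonneg (by linarith) (by positivity)
    calc p * Real.sinh (β / (2 * N * p)) * m2
        ≤ s / (2 * N) * m2 := mul_le_mul_of_nonneg_right hsinh' (le_trans (by positivity) hm2)
      _ = a * m2 / 2 - (1 - s) / (4 * N) * m2 := by
        simp only [a]
        field_simp
        ring
      _ ≤ a * m2 / 2 - (1 - s) / (4 * N) * ((N : ℝ) ^ 2 * p) := by gcongr
      _ = a * m2 / 2 - (1 - s) * (N * p) / 4 := by
        field_simp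
  calc ∑ σ ∈ Finset.univ.filter (fun σ : Fin N → Bool => (N : ℝ) ^ 2 * p < mag σ ^ 2),
        ∫ ε, Real.exp (-β * hamil N p ε σ) ∂(bern N p)
      ≤ ∑ σ ∈ Finset.univ.filter (fun σ : Fin N → Bool => (N : ℝ) ^ 2 * p < mag σ ^ 2),
          Real.exp (A - (1 - s) * (N * p) / 4) * Real.exp (a * mag σ ^ 2 / 2) := by
        refine Finset.sum_le_sum fun σ hσ => ?_
        refine (integral_exp_neg_mul_hamil_le hp0.le hp1 β σ).trans ?_
        rw [← Real.exp_add, Real.exp_le_exp]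
        linarith [hexponent _ (Finset.mem_filter.1 hσ).2.le]
    _ ≤ Real.exp (A - (1 - s) * (N * p) / 4) *
          ∑ σ : Fin N → Bool, Real.exp (a * mag σ ^ 2 / 2) := by
        rw [← Finset.mul_sum]
        gcongr
        exact Finset.filter_subset _ _
    _ ≤ Real.exp (A - (1 - s) * (N * p) / 4) * (2 ^ N / √((1 - s) / 2)) := by
        gcongr
        refine (sum_exp_mag_sq_le N ha0 (by linarith)).trans_eq ?_
        rw [hNa]
        ring_nf

/-- **Step 1 of the proof of Theorem 3 (atypical configurations).** For `0 < β < 1` and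
`p = p(N)` with `pN → ∞`, with `T_N^c = {σ : |σ|² > N²p}` and
`A_N(β) = -β²/8 + N²p(cosh(β/(2Np)) - 1)`, one has
`∑_{σ ∈ T_N^c} 𝔼 e^{-βH(σ)} = o(2^N e^{A_N(β)})`. -/
theorem atypical_sum_small (β : ℝ) (hβ : β ∈ Set.Ioo (0 : ℝ) 1)
    (p : ℕ → ℝ) (hp : ∀ N, p N ∈ Set.Ioc (0 : ℝ) 1)
    (hpN : Tendsto (fun N : ℕ => p N * (N : ℝ)) atTop atTop) :
    Tendsto (fun N : ℕ =>
        (∑ σ ∈ Finset.univ.filter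
            (fun σ : Fin N → Bool => (N : ℝ) ^ 2 * p N < (mag σ) ^ 2),
          ∫ ω, Real.exp (-β * hamil N (p N) ω σ) ∂(bern N (p N))) /
        (2 ^ N * Real.exp (-β ^ 2 / 8 +
            (N : ℝ) ^ 2 * p N * (Real.cosh (β / (2 * N * p N)) - 1))))
      atTop (nhds 0) := by
  obtain ⟨hβ0, hβ1⟩ := hβ
  obtain ⟨s, hβs, hs1⟩ := exists_between hβ1
  have hNp : Tendsto (fun N : ℕ => (N : ℝ) * p N) atTop atTop :=
    hpN.congr fun N => mul_comm _ _
  have hb : Tendsto (fun N : ℕ => β / (2 * N * p N)) atTop (nhds 0) := by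
    simpa only [mul_assoc] using tendsto_const_nhds.div_atTop (hNp.const_mul_atTop two_pos)
  have hsinh : ∀ᶠ N : ℕ in atTop, 2 * N * p N * Real.sinh (β / (2 * N * p N)) ≤ s := by
    have hexp : Tendsto (fun N : ℕ => β * Real.exp (β / (2 * N * p N))) atTop (nhds β) := by
      simpa using tendsto_const_nhds.mul ((Real.continuous_exp.tendsto 0).comp hb)
    filter_upwards [hexp.eventually (eventually_le_nhds (by linarith)),
      hNp.eventually_gt_atTop 0] with N hexpN hNpN
    exact (two_mul_mul_sinh_div_le hNpN β).trans hexpN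
  have hbound : Tendsto (fun N : ℕ => Real.exp (β ^ 2 / 8) / √((1 - s) / 2) *
      Real.exp (-((1 - s) / 4) * (N * p N))) atTop (nhds 0) := by
    simpa using ((Real.tendsto_exp_atBot.comp
      (hNp.const_mul_atTop_of_neg (by linarith : -((1 - s) / 4) < 0))).const_mul _)
  refine squeeze_zero' (Eventually.of_forall fun N => div_nonneg
    (Finset.sum_nonneg fun σ _ => integral_nonneg fun ε => (Real.exp_pos _).le) (by positivity))
    ?_ hbound
  filter_upwards [hsinh, eventually_gt_atTop 0] with N hsinhN hN
  rw [div_le_iff₀ (by positivity)]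
  refine (atypical_sum_le hN (hp N).1 (hp N).2 (by linarith) hs1 hsinhN).trans_eq ?_
  rw [Real.exp_sub, Real.exp_add, neg_div, Real.exp_neg, neg_mul, Real.exp_neg]
  field_simp
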